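/- arXiv:1903.11530 — 3 statements merged into one kernel-verified Lean document; each statement's English description precedes it below -/
import Mathlib

section
/- Let T ∈ ℝ, τ > 0, ω(t) = exp((t−T)/τ), x(t) = ω(t) for t ≤ T, and let I : (−∞,T] → ℝ be continuous, nonnegative and bounded, with V₀(t) = ∫_t^T I(s) ds. Fix n ≥ 1 and let P_n be the space of real polynomials of degree < n. Suppose ψ ∈ P_n is nonzero and satisfies, for some λ ∈ ℝ, ∫_{−∞}^T φ(x(t)) V₀(t) ψ(x(t)) ω(t) dt = λ ∫_{−∞}^T φ(x(t)) (T−t) ψ(x(t)) ω(t) dt for every φ ∈ P_n, and suppose λ is maximal in the sense that ∫_{−∞}^T φ(x(t))² V₀(t) ω(t) dt ≤ λ ∫_{−∞}^T φ(x(t))² (T−t) ω(t) dt for every φ ∈ P_n. Then the expectation of dI/dt in the state ψ, defined by integration by parts with boundary value λ as λ·ψ(1)² − ∫_{−∞}^T I(t) · (d/dt)[ψ(x(t))² ω(t)] dt, is nonnegative. -/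
/-!
With `x = exp ((t - T) / τ)`, the operator `τ d/dt` acts on polynomials in `x` as the Euler
operator `θ = x d/dx`. Integrating by parts against `V₀' = -I` and expanding
`θ² (x ψ²) = x (2 χ² + ρ ψ)`, where `χ = ψ + θ ψ` and `ρ = 2 θ² ψ - ψ` lie in `P_n`, gives
`τ² ∫ I d/dt[ψ(x)² ω] = 2 ⟨χ|V₀|χ⟩ + ⟨ρ|V₀|ψ⟩`. The same computation with `T - t`
(whose derivative is `-1`) in place of `V₀` gives `2 ⟨χ|T-t|χ⟩ + ⟨ρ|T-t|ψ⟩ = τ² ψ(1)²`.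
Maximality of `λ` gives `⟨χ|V₀|χ⟩ ≤ λ ⟨χ|T-t|χ⟩`, the eigenvalue equation gives
`⟨ρ|V₀|ψ⟩ = λ ⟨ρ|T-t|ψ⟩`, and the claim follows. All boundary terms at `-∞` vanish because
`x` decays exponentially while `V₀` grows at most linearly.
-/

open MeasureTheory Set Polynomial Filter Topology Real

namespace Polynomial

variable {R : Type*}

section Semiring

variable [Semiring R]

noncomputable def euler (q : R[X]) : R[X] := X * derivative q

theorem coeff_euler (q : R[X]) (m : ℕ) : (euler q).coeff m = m * q.coeff m := by
  cases m with
  | zero => simp [euler]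
  | succ m => rw [euler, coeff_X_mul, coeff_derivative, Nat.cast_comm]; push_cast; rfl

theorem euler_mem_degreeLT {q : R[X]} {n : ℕ} (hq : q ∈ degreeLT R n) :
    euler q ∈ degreeLT R n := by
  rw [mem_degreeLT, degree_lt_iff_coeff_zero] at hq ⊢
  intro m hm
  rw [coeff_euler, hq m hm, mul_zero]

end Semiring

theorem eval_euler [CommSemiring R] (q : R[X]) (y : R) :
    (euler q).eval y = (derivative q).eval y * y := by
  rw [euler, eval_mul, eval_X, mul_comm]

theorem euler_euler_X_mul_sq [CommRing R] (ψ : R[X]) :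
    euler (euler (X * ψ ^ 2))
      = X * (2 * (ψ + euler ψ) ^ 2 + (2 * euler (euler ψ) - ψ) * ψ) := by
  simp only [euler, sq, derivative_mul, derivative_X, derivative_add, one_mul]
  ring

end Polynomial

noncomputable def expWeight (T τ t : ℝ) : ℝ := exp ((t - T) / τ)

section ExpWeight

variable {T τ : ℝ}

theorem expWeight_pos (t : ℝ) : 0 < expWeight T τ t := exp_pos _

theorem expWeight_le_one (hτ : 0 ≤ τ) {t : ℝ} (ht : t ≤ T) : expWeight T τ t ≤ 1 :=
  exp_le_one_iff.2 (div_nonpos_of_nonpos_of_nonneg (sub_nonpos.2 ht) hτ)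

theorem expWeight_self : expWeight T τ T = 1 := by simp [expWeight]

theorem continuous_expWeight : Continuous (expWeight T τ) := by
  unfold expWeight; fun_prop

theorem hasDerivAt_eval_expWeight (q : ℝ[X]) (t : ℝ) :
    HasDerivAt (fun s => q.eval (expWeight T τ s)) ((euler q).eval (expWeight T τ t) / τ) t := by
  have he : HasDerivAt (expWeight T τ) (expWeight T τ t * (1 / τ)) t :=
    (((hasDerivAt_id t).sub_const T).div_const τ).exp
  refine ((q.hasDerivAt _).comp t he).congr_deriv ?_
  rw [eval_euler]; ring

theorem tendsto_expWeight_atBot (hτ : 0 < τ) : Tendsto (expWeight T τ) atBot (𝓝 0) :=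
  tendsto_exp_atBot.comp ((tendsto_atBot_add_const_right _ (-T) tendsto_id).atBot_div_const hτ)

theorem integrableOn_expWeight (hτ : 0 < τ) (c : ℝ) : IntegrableOn (expWeight T τ) (Iic c) := by
  have h : IntegrableOn (fun t => exp (τ⁻¹ * t) * exp (-T / τ)) (Iic c) :=
    (integrableOn_exp_mul_Iic (inv_pos.2 hτ) c).mul_const _
  refine h.congr_fun (fun t _ => ?_) measurableSet_Iic
  dsimp only; rw [expWeight, ← exp_add]; ring_nf

theorem sub_mul_expWeight_le (hτ : 0 < τ) (t : ℝ) : (T - t) * expWeight T τ t ≤ τ := by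
  have h := add_one_le_exp ((T - t) / τ)
  have h' : T - t ≤ τ * exp ((T - t) / τ) := by
    have := mul_le_mul_of_nonneg_left h hτ.le
    rw [mul_add, mul_div_cancel₀ _ hτ.ne'] at this
    linarith
  calc (T - t) * expWeight T τ t ≤ τ * exp ((T - t) / τ) * expWeight T τ t :=
        mul_le_mul_of_nonneg_right h' (expWeight_pos t).le
    _ = τ := by rw [expWeight, mul_assoc, ← exp_add]; ring_nf; simp

theorem one_add_sub_mul_expWeight_le (hτ : 0 < τ) {t : ℝ} (ht : t ≤ T) :
    (1 + (T - t)) * expWeight T τ t ≤ (1 + 2 * τ) * expWeight T (2 * τ) t := by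
  have hsq : expWeight T τ t = expWeight T (2 * τ) t * expWeight T (2 * τ) t := by
    rw [expWeight, expWeight, ← exp_add]; congr 1; field_simp; ring
  have h1 := expWeight_le_one (T := T) (by positivity : 0 ≤ 2 * τ) ht
  have h2 := sub_mul_expWeight_le (T := T) (by positivity : 0 < 2 * τ) t
  have h3 := expWeight_pos (T := T) (τ := 2 * τ) t
  rw [hsq]
  nlinarith

theorem exists_abs_eval_expWeight_le (hτ : 0 ≤ τ) (r : ℝ[X]) :
    ∃ C, ∀ t ≤ T, |r.eval (expWeight T τ t)| ≤ C := by
  obtain ⟨C, hC⟩ := (isCompact_Icc (a := (0 : ℝ)) (b := 1)).exists_bound_of_continuousOn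
    r.continuous.continuousOn
  exact ⟨C, fun t ht => hC _ ⟨(expWeight_pos t).le, expWeight_le_one hτ ht⟩⟩

theorem exists_abs_mul_eval_expWeight_le (hτ : 0 < τ) {f : ℝ → ℝ} {K : ℝ}
    (hfK : ∀ t ≤ T, |f t| ≤ K * (1 + (T - t))) (r : ℝ[X]) :
    ∃ C, ∀ t ≤ T,
      |f t * r.eval (expWeight T τ t) * expWeight T τ t| ≤ C * expWeight T (2 * τ) t := by
  obtain ⟨C, hC⟩ := exists_abs_eval_expWeight_le (T := T) hτ.le r
  have hK : 0 ≤ K := by simpa using (abs_nonneg _).trans (hfK T le_rfl)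
  have hC0 : 0 ≤ C := (abs_nonneg _).trans (hC T le_rfl)
  refine ⟨K * C * (1 + 2 * τ), fun t ht => ?_⟩
  have he := expWeight_pos (T := T) (τ := τ) t
  calc |f t * r.eval (expWeight T τ t) * expWeight T τ t|
      = |f t| * |r.eval (expWeight T τ t)| * expWeight T τ t := by
        rw [abs_mul, abs_mul, abs_of_pos he]
    _ ≤ K * (1 + (T - t)) * C * expWeight T τ t := by gcongr; exacts [hfK t ht, hC t ht]
    _ = K * C * ((1 + (T - t)) * expWeight T τ t) := by ring
    _ ≤ K * C * ((1 + 2 * τ) * expWeight T (2 * τ) t) :=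
        mul_le_mul_of_nonneg_left (one_add_sub_mul_expWeight_le hτ ht) (mul_nonneg hK hC0)
    _ = K * C * (1 + 2 * τ) * expWeight T (2 * τ) t := by ring

theorem integrableOn_mul_eval_expWeight (hτ : 0 < τ) {f : ℝ → ℝ} {K : ℝ}
    (hf : ContinuousOn f (Iic T)) (hfK : ∀ t ≤ T, |f t| ≤ K * (1 + (T - t))) (r : ℝ[X]) :
    IntegrableOn (fun t => f t * r.eval (expWeight T τ t) * expWeight T τ t) (Iic T) := by
  obtain ⟨C, hC⟩ := exists_abs_mul_eval_expWeight_le hτ hfK r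
  have hint := integrableOn_expWeight (T := T) (τ := 2 * τ) (by positivity) T
  refine (hint.const_mul C).mono' ?_ ?_
  · exact ((hf.mul (r.continuous.comp continuous_expWeight).continuousOn).mul
      continuous_expWeight.continuousOn).aestronglyMeasurable measurableSet_Iic
  · exact (ae_restrict_iff' measurableSet_Iic).2 (ae_of_all _ hC)

theorem tendsto_mul_eval_expWeight_atBot (hτ : 0 < τ) {f : ℝ → ℝ} {K : ℝ}
    (hfK : ∀ t ≤ T, |f t| ≤ K * (1 + (T - t))) (r : ℝ[X]) :
    Tendsto (fun t => f t * r.eval (expWeight T τ t) * expWeight T τ t) atBot (𝓝 0) := by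
  obtain ⟨C, hC⟩ := exists_abs_mul_eval_expWeight_le hτ hfK r
  have hlim := (tendsto_expWeight_atBot (T := T) (τ := 2 * τ) (by positivity)).const_mul C
  refine squeeze_zero_norm' ?_ (by simpa using hlim)
  filter_upwards [eventually_le_atBot T] with t ht using hC t ht

end ExpWeight

section Primitive

variable {T : ℝ} {I : ℝ → ℝ}

theorem integral_hasDerivAt_left_of_continuousOn_Iic (hI : ContinuousOn I (Iic T)) {t : ℝ}
    (ht : t < T) : HasDerivAt (fun u => ∫ s in u..T, I s) (-I t) t :=
  intervalIntegral.integral_hasDerivAt_left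
    ((hI.mono fun _ hs => (uIcc_of_le ht.le ▸ hs).2).intervalIntegrable)
    ((hI.mono Iio_subset_Iic_self).stronglyMeasurableAtFilter isOpen_Iio t ht)
    (hI.continuousAt (Iic_mem_nhds ht))

theorem continuousOn_primitive_Iic (hI : ContinuousOn I (Iic T)) :
    ContinuousOn (fun u => ∫ s in u..T, I s) (Iic T) := by
  intro t (ht : t ≤ T)
  have hsub : uIcc (t - 1) T = Icc (t - 1) T := uIcc_of_le (by linarith)
  have h := intervalIntegral.continuousOn_primitive_interval_left (μ := volume)
    ((hI.mono (hsub ▸ Icc_subset_Iic_self)).integrableOn_compact isCompact_uIcc)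
  refine (h t (hsub ▸ ⟨by linarith, ht⟩)).mono_of_mem_nhdsWithin (hsub ▸ ?_)
  exact mem_of_superset (inter_mem_nhdsWithin (Iic T) (Ioi_mem_nhds (sub_one_lt t)))
    fun s hs => ⟨hs.2.le, hs.1⟩

theorem abs_primitive_le {M : ℝ} (hIM : ∀ t ≤ T, |I t| ≤ M) {t : ℝ} (ht : t ≤ T) :
    |∫ s in t..T, I s| ≤ M * (T - t) := by
  have h := intervalIntegral.norm_integral_le_of_norm_le_const (f := I) fun s hs =>
    (Real.norm_eq_abs _).trans_le (hIM s (uIoc_of_le ht ▸ hs).2)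
  rwa [Real.norm_eq_abs, abs_of_nonneg (sub_nonneg.2 ht)] at h

end Primitive

section Integrals

variable {T τ : ℝ}

theorem integral_mul_eval_euler_expWeight (hτ : 0 < τ) {J W : ℝ → ℝ} {K : ℝ}
    (hJ : ContinuousOn J (Iic T)) (hW : ∀ t < T, HasDerivAt W (-J t) t)
    (hWc : ContinuousOn W (Iic T)) (hWT : W T = 0)
    (hJK : ∀ t ≤ T, |J t| ≤ K * (1 + (T - t))) (hWK : ∀ t ≤ T, |W t| ≤ K * (1 + (T - t)))
    (q : ℝ[X]) :
    ∫ t in Iic T, J t * (euler q).eval (expWeight T τ t)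
      = (∫ t in Iic T, W t * (euler (euler q)).eval (expWeight T τ t)) / τ := by
  have hJint : IntegrableOn (fun t => J t * (euler q).eval (expWeight T τ t)) (Iic T) :=
    (integrableOn_mul_eval_expWeight hτ hJ hJK (derivative q)).congr_fun
      (fun t _ => by simp only [eval_euler, mul_assoc]) measurableSet_Iic
  have hWint : IntegrableOn (fun t => W t * (euler (euler q)).eval (expWeight T τ t) / τ)
      (Iic T) :=
    IntegrableOn.congr_fun
      ((integrableOn_mul_eval_expWeight hτ hWc hWK (derivative (euler q))).div_const τ)
      (fun t _ => by simp only [eval_euler (euler q), mul_assoc]) measurableSet_Iic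
  have hF : ∀ t < T, HasDerivAt (fun s => W s * (euler q).eval (expWeight T τ s))
      (W t * (euler (euler q)).eval (expWeight T τ t) / τ
        - J t * (euler q).eval (expWeight T τ t)) t := fun t ht =>
    ((hW t ht).mul (hasDerivAt_eval_expWeight (T := T) (τ := τ) (euler q) t)).congr_deriv (by ring)
  have hlim : Tendsto (fun s => W s * (euler q).eval (expWeight T τ s)) atBot (𝓝 0) :=
    (tendsto_mul_eval_expWeight_atBot hτ hWK (derivative q)).congr fun t => by
      simp only [eval_euler, mul_assoc]
  have hFc : ContinuousWithinAt (fun s => W s * (euler q).eval (expWeight T τ s)) (Iic T) T :=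
    (hWc T self_mem_Iic).mul ((euler q).continuous.comp continuous_expWeight).continuousWithinAt
  have h := integral_Iic_of_hasDerivAt_of_tendsto hFc (fun t ht => hF t ht) (hWint.sub hJint) hlim
  rw [integral_sub hWint hJint, integral_div, hWT, zero_mul, sub_zero] at h
  linarith

theorem integral_eval_euler_expWeight (hτ : 0 < τ) (q : ℝ[X]) :
    ∫ t in Iic T, (euler q).eval (expWeight T τ t) = τ * (q.eval 1 - q.eval 0) := by
  have hint : IntegrableOn (fun t => (euler q).eval (expWeight T τ t)) (Iic T) :=
    (integrableOn_mul_eval_expWeight (f := fun _ => 1) (K := 1) hτ continuousOn_const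
      (fun t ht => by simp; linarith) (derivative q)).congr_fun
      (fun t _ => by simp only [eval_euler, one_mul]) measurableSet_Iic
  have hF : ∀ t, HasDerivAt (fun s => τ * q.eval (expWeight T τ s))
      ((euler q).eval (expWeight T τ t)) t := fun t =>
    ((hasDerivAt_eval_expWeight (T := T) q t).const_mul τ).congr_deriv (by field_simp)
  have hlim : Tendsto (fun s => τ * q.eval (expWeight T τ s)) atBot (𝓝 (τ * q.eval 0)) :=
    ((q.continuous.tendsto 0).comp (tendsto_expWeight_atBot hτ)).const_mul τ
  rw [integral_Iic_of_hasDerivAt_of_tendsto' (fun t _ => hF t) hint hlim, expWeight_self]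
  ring

theorem integral_sub_mul_eval_euler_euler_expWeight (hτ : 0 < τ) (q : ℝ[X]) :
    ∫ t in Iic T, (T - t) * (euler (euler q)).eval (expWeight T τ t)
      = τ ^ 2 * (q.eval 1 - q.eval 0) := by
  have hbound : ∀ t ≤ T, |(1 : ℝ)| ≤ 1 * (1 + (T - t)) := fun t ht => by simp; linarith
  have h := integral_mul_eval_euler_expWeight hτ continuousOn_const
    (fun t _ => by simpa using (hasDerivAt_id t).const_sub T) (by fun_prop) (sub_self T) hbound
    (fun t ht => by rw [abs_of_nonneg (sub_nonneg.2 ht)]; linarith) q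
  simp only [one_mul, integral_eval_euler_expWeight hτ] at h
  rw [eq_div_iff hτ.ne'] at h
  linear_combination -h

end Integrals

/-- The paper's `⟨φ|f|ψ⟩`, with `x = ω = expWeight T τ`. -/
noncomputable def braket (T τ : ℝ) (φ : ℝ[X]) (f : ℝ → ℝ) (ψ : ℝ[X]) : ℝ :=
  ∫ t in Iic T, φ.eval (expWeight T τ t) * f t * ψ.eval (expWeight T τ t) * expWeight T τ t

section Braket

variable {T τ : ℝ}

theorem braket_self (φ : ℝ[X]) (f : ℝ → ℝ) :
    braket T τ φ f φ = ∫ t in Iic T, φ.eval (expWeight T τ t) ^ 2 * f t * expWeight T τ t := by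
  unfold braket; congr 1 with t; ring

theorem integral_mul_eval_euler_euler_X_mul_sq (hτ : 0 < τ) {f : ℝ → ℝ} {K : ℝ}
    (hf : ContinuousOn f (Iic T)) (hfK : ∀ t ≤ T, |f t| ≤ K * (1 + (T - t))) (ψ : ℝ[X]) :
    ∫ t in Iic T, f t * (euler (euler (X * ψ ^ 2))).eval (expWeight T τ t)
      = 2 * braket T τ (ψ + euler ψ) f (ψ + euler ψ)
        + braket T τ (2 * euler (euler ψ) - ψ) f ψ := by
  have hint : ∀ φ χ : ℝ[X], IntegrableOn
      (fun t => φ.eval (expWeight T τ t) * f t * χ.eval (expWeight T τ t) * expWeight T τ t)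
      (Iic T) := fun φ χ =>
    (integrableOn_mul_eval_expWeight hτ hf hfK (φ * χ)).congr_fun
      (fun t _ => by simp only [eval_mul]; ring) measurableSet_Iic
  rw [braket, braket, ← integral_const_mul, ← integral_add ((hint _ _).const_mul 2) (hint _ _)]
  refine setIntegral_congr_fun measurableSet_Iic fun t _ => ?_
  rw [euler_euler_X_mul_sq]
  simp only [eval_mul, eval_add, eval_sub, eval_X, eval_pow, eval_ofNat]
  ring

theorem deriv_eval_sq_mul_expWeight (ψ : ℝ[X]) (t : ℝ) :
    deriv (fun s => ψ.eval (expWeight T τ s) ^ 2 * expWeight T τ s) t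
      = (euler (X * ψ ^ 2)).eval (expWeight T τ t) / τ := by
  have h : (fun s => ψ.eval (expWeight T τ s) ^ 2 * expWeight T τ s)
      = fun s => (X * ψ ^ 2).eval (expWeight T τ s) := by
    funext s; rw [eval_mul, eval_pow, eval_X, mul_comm]
  rw [h]
  exact (hasDerivAt_eval_expWeight _ t).deriv

theorem integral_mul_eval_euler_X_mul_sq_le (hτ : 0 < τ) {I : ℝ → ℝ} {M : ℝ}
    (hIc : ContinuousOn I (Iic T)) (hIM : ∀ t ≤ T, |I t| ≤ M) {ψ : ℝ[X]} {lam : ℝ}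
    (heig : braket T τ (2 * euler (euler ψ) - ψ) (fun t => ∫ s in t..T, I s) ψ
      = lam * braket T τ (2 * euler (euler ψ) - ψ) (fun t => T - t) ψ)
    (hmax : braket T τ (ψ + euler ψ) (fun t => ∫ s in t..T, I s) (ψ + euler ψ)
      ≤ lam * braket T τ (ψ + euler ψ) (fun t => T - t) (ψ + euler ψ)) :
    (∫ t in Iic T, I t * (euler (X * ψ ^ 2)).eval (expWeight T τ t)) / τ
      ≤ lam * ψ.eval 1 ^ 2 := by
  have hM : 0 ≤ M := (abs_nonneg _).trans (hIM T le_rfl)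
  have hIK : ∀ t ≤ T, |I t| ≤ M * (1 + (T - t)) := fun t ht =>
    (hIM t ht).trans (le_mul_of_one_le_right hM (by linarith))
  have hVK : ∀ t ≤ T, |∫ s in t..T, I s| ≤ M * (1 + (T - t)) := fun t ht =>
    (abs_primitive_le hIM ht).trans (by nlinarith)
  have hVc := continuousOn_primitive_Iic hIc
  have hTK : ∀ t ≤ T, |T - t| ≤ 1 * (1 + (T - t)) := fun t ht => by
    rw [abs_of_nonneg (sub_nonneg.2 ht)]; linarith
  calc (∫ t in Iic T, I t * (euler (X * ψ ^ 2)).eval (expWeight T τ t)) / τ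
      = (2 * braket T τ (ψ + euler ψ) (fun t => ∫ s in t..T, I s) (ψ + euler ψ)
          + braket T τ (2 * euler (euler ψ) - ψ) (fun t => ∫ s in t..T, I s) ψ) / τ ^ 2 := by
        rw [integral_mul_eval_euler_expWeight hτ hIc
            (fun t => integral_hasDerivAt_left_of_continuousOn_Iic hIc) hVc
            intervalIntegral.integral_same hIK hVK,
          integral_mul_eval_euler_euler_X_mul_sq hτ hVc hVK]
        ring
    _ ≤ lam * (2 * braket T τ (ψ + euler ψ) (fun t => T - t) (ψ + euler ψ)
          + braket T τ (2 * euler (euler ψ) - ψ) (fun t => T - t) ψ) / τ ^ 2 := by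
        gcongr
        linarith
    _ = lam * ψ.eval 1 ^ 2 := by
        rw [← integral_mul_eval_euler_euler_X_mul_sq hτ (by fun_prop) hTK,
          integral_sub_mul_eval_euler_euler_expWeight hτ]
        simp only [eval_mul, eval_X, eval_pow, zero_mul, sub_zero, one_mul]
        field_simp

end Braket

theorem stmt_0_general (T τ : ℝ) (hτ : 0 < τ)
    (ω x : ℝ → ℝ)
    (hω : ∀ t, ω t = Real.exp ((t - T) / τ))
    (hx : ∀ t, x t = ω t)
    (I : ℝ → ℝ)
    (hIc : ContinuousOn I (Set.Iic T))
    (hInn : ∀ t ≤ T, 0 ≤ I t)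
    (hIb : ∃ M, ∀ t ≤ T, I t ≤ M)
    (V₀ : ℝ → ℝ) (hV : ∀ t, V₀ t = ∫ s in t..T, I s)
    (n : ℕ)
    (ψ : Polynomial ℝ) (hψd : ψ.degree < (n : WithBot ℕ))
    (lam : ℝ)
    (heig : ∀ φ : Polynomial ℝ, φ.degree < (n : WithBot ℕ) →
      ∫ t in Set.Iic T, φ.eval (x t) * V₀ t * ψ.eval (x t) * ω t
        = lam * ∫ t in Set.Iic T, φ.eval (x t) * (T - t) * ψ.eval (x t) * ω t)
    (hmax : ∀ φ : Polynomial ℝ, φ.degree < (n : WithBot ℕ) →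
      ∫ t in Set.Iic T, (φ.eval (x t)) ^ 2 * V₀ t * ω t
        ≤ lam * ∫ t in Set.Iic T, (φ.eval (x t)) ^ 2 * (T - t) * ω t) :
    0 ≤ lam * (ψ.eval 1) ^ 2
        - ∫ t in Set.Iic T, I t * deriv (fun s => (ψ.eval (x s)) ^ 2 * ω s) t := by
  obtain rfl : ω = expWeight T τ := funext hω
  obtain rfl : x = expWeight T τ := funext hx
  obtain rfl : V₀ = fun t => ∫ s in t..T, I s := funext hV
  obtain ⟨M, hM⟩ := hIb
  have hIM : ∀ t ≤ T, |I t| ≤ M := fun t ht =>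
    abs_le.2 ⟨by linarith [hInn t ht, hM t ht], hM t ht⟩
  have hψ : ψ ∈ degreeLT ℝ n := mem_degreeLT.2 hψd
  have hψ' : euler (euler ψ) ∈ degreeLT ℝ n := euler_mem_degreeLT (euler_mem_degreeLT hψ)
  have hχ : ψ + euler ψ ∈ degreeLT ℝ n := add_mem hψ (euler_mem_degreeLT hψ)
  have hρ : 2 * euler (euler ψ) - ψ ∈ degreeLT ℝ n :=
    two_mul (euler (euler ψ)) ▸ sub_mem (add_mem hψ' hψ') hψ
  rw [sub_nonneg]
  simp only [deriv_eval_sq_mul_expWeight, ← mul_div_assoc, integral_div]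
  exact integral_mul_eval_euler_X_mul_sq_le hτ hIc hIM (heig _ (mem_degreeLT.1 hρ))
    (by simpa only [braket_self] using hmax _ (mem_degreeLT.1 hχ))

/-- In the state of maximal aggregated execution flow `V/t`, the expectation of
`dI/dt` (defined by integration by parts with boundary value `λ`) is nonnegative. -/
theorem stmt_0 (T τ : ℝ) (hτ : 0 < τ)
    (ω x : ℝ → ℝ)
    (hω : ∀ t, ω t = Real.exp ((t - T) / τ))
    (hx : ∀ t, x t = ω t)
    (I : ℝ → ℝ)
    (hIc : ContinuousOn I (Set.Iic T))
    (hInn : ∀ t ≤ T, 0 ≤ I t)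
    (hIb : ∃ M, ∀ t ≤ T, I t ≤ M)
    (V₀ : ℝ → ℝ) (hV : ∀ t, V₀ t = ∫ s in t..T, I s)
    (n : ℕ) (hn : 1 ≤ n)
    (ψ : Polynomial ℝ) (hψ0 : ψ ≠ 0) (hψd : ψ.degree < (n : WithBot ℕ))
    (lam : ℝ)
    (heig : ∀ φ : Polynomial ℝ, φ.degree < (n : WithBot ℕ) →
      ∫ t in Set.Iic T, φ.eval (x t) * V₀ t * ψ.eval (x t) * ω t
        = lam * ∫ t in Set.Iic T, φ.eval (x t) * (T - t) * ψ.eval (x t) * ω t)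
    (hmax : ∀ φ : Polynomial ℝ, φ.degree < (n : WithBot ℕ) →
      ∫ t in Set.Iic T, (φ.eval (x t)) ^ 2 * V₀ t * ω t
        ≤ lam * ∫ t in Set.Iic T, (φ.eval (x t)) ^ 2 * (T - t) * ω t) :
    0 ≤ lam * (ψ.eval 1) ^ 2
        - ∫ t in Set.Iic T, I t * deriv (fun s => (ψ.eval (x s)) ^ 2 * ω s) t :=
  stmt_0_general T τ hτ ω x hω hx I hIc hInn hIb V₀ hV n ψ hψd lam heig hmax
end

section
/- Let T ∈ ℝ, τ > 0, ω(t) = exp((t−T)/τ), x(t) = ω(t) for t ≤ T, and let I : (−∞,T] → ℝ be continuous, nonnegative and bounded, with V₀(t) = ∫_t^T I(s) ds. Fix n ≥ 1 and let P_n be the space of real polynomials of degree < n. Suppose ψ ∈ P_n is nonzero and satisfies, for some λ ∈ ℝ, ∫_{−∞}^T φ(x(t)) V₀(t) ψ(x(t)) ω(t) dt = λ ∫_{−∞}^T φ(x(t)) (T−t) ψ(x(t)) ω(t) dt for every φ ∈ P_n. Define the infinitesimal time-shift δψ(x) = x ψ′(x)/τ. Then ∫_{−∞}^T δψ(x(t))²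 V₀(t) ω(t) dt − λ ∫_{−∞}^T δψ(x(t))² (T−t) ω(t) dt = ∫_{−∞}^T δψ(x(t)) I(t) ψ(x(t)) ω(t) dt − λ ∫_{−∞}^T δψ(x(t)) ψ(x(t)) ω(t) dt; that is, for the time-shift variation δψ = D(ψ), the second variation of the aggregated flow V/t equals the first variation of the local flow dV/dt. -/
/-!
Write `D` for the time shift, so that `d/dt p(x(t)) = (D p)(x(t))`; recall `ω = x` and
`x' = x/τ`. For a weight `w` with `w(T) = 0` and `w' = -v`, the derivative of `(Dψ · ψ)(x) w x`
is `(Dψ)² w ω + ((D + 1/τ) Dψ) ψ w ω - Dψ v ψ ω`. The weights `V₀` (`v = I`) and `T - t`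
(`v = 1`) grow at most linearly while `ω` decays exponentially, so this integrates to zero over
`(-∞, T]`. Since `(D + 1/τ) Dψ` again lies in `P_n`, testing the eigen-equation against it
cancels the middle terms of the two identities.
-/

open MeasureTheory Set Filter Polynomial Topology

-- Both the weight `ω` and the coordinate `x` of the paper.
noncomputable def decayWeight (T τ t : ℝ) : ℝ := Real.exp ((t - T) / τ)

section DecayWeight

variable {T τ : ℝ}

lemma decayWeight_pos (t : ℝ) : 0 < decayWeight T τ t := Real.exp_pos _

lemma decayWeight_le_one (hτ : 0 ≤ τ) {t : ℝ} (ht : t ≤ T) : decayWeight T τ t ≤ 1 :=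
  Real.exp_le_one_iff.2 (div_nonpos_of_nonpos_of_nonneg (by linarith) hτ)

lemma continuous_decayWeight : Continuous (decayWeight T τ) := by
  unfold decayWeight; fun_prop

lemma hasDerivAt_decayWeight (t : ℝ) :
    HasDerivAt (decayWeight T τ) (decayWeight T τ t / τ) t :=
  ((((hasDerivAt_id' t).sub_const T).div_const τ).exp).congr_deriv (by
    simp only [decayWeight]; ring)

lemma tendsto_one_add_sub_mul_decayWeight_atBot (hτ : 0 < τ) :
    Tendsto (fun t => (1 + (T - t)) * decayWeight T τ t) atBot (𝓝 0) := by
  have hu : Tendsto (fun t : ℝ => (T - t) / τ) atBot atTop :=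
    (tendsto_atTop_add_const_left _ T tendsto_neg_atBot_atTop).atTop_div_const hτ
  have h := ((Real.tendsto_exp_neg_atTop_nhds_zero.add
    ((Real.tendsto_pow_mul_exp_neg_atTop_nhds_zero 1).const_mul τ)).comp hu)
  rw [mul_zero, add_zero] at h
  refine h.congr fun t => ?_
  simp only [Function.comp_apply, pow_one, decayWeight, ← neg_div, neg_sub]
  field_simp

lemma integrableOn_one_add_sub_mul_decayWeight (hτ : 0 < τ) :
    IntegrableOn (fun t => (1 + (T - t)) * decayWeight T τ t) (Iic T) := by
  set g : ℝ → ℝ := fun t => (1 + (T - t)) * decayWeight T τ t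
  set G : ℝ → ℝ := fun t => τ * (1 + τ + (T - t)) * decayWeight T τ t
  have hG : ∀ t, HasDerivAt G (g t) t := fun t =>
    ((((hasDerivAt_id' t).const_sub T).const_add (1 + τ)).const_mul τ |>.mul
      (hasDerivAt_decayWeight t)).congr_deriv (by field_simp; ring)
  have hg : Continuous g := by have := continuous_decayWeight (T := T) (τ := τ); fun_prop
  refine integrableOn_Iic_of_intervalIntegral_norm_bounded (G T) T
    (fun y => hg.integrableOn_Ioc) tendsto_id ?_
  filter_upwards [Iic_mem_atBot T] with y (hy : y ≤ T)
  have hnorm : ∀ t ∈ uIcc y T, ‖g t‖ = g t := fun t ht => by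
    rw [uIcc_of_le hy] at ht
    exact Real.norm_of_nonneg (mul_nonneg (by linarith [ht.2]) (decayWeight_pos t).le)
  calc ∫ t in y..T, ‖g t‖ = ∫ t in y..T, g t := intervalIntegral.integral_congr hnorm
    _ = G T - G y :=
      intervalIntegral.integral_eq_sub_of_hasDerivAt (fun t _ => hG t) (hg.intervalIntegrable _ _)
    _ ≤ G T := sub_le_self _ (mul_nonneg (mul_nonneg hτ.le (by linarith)) (decayWeight_pos y).le)

end DecayWeight

noncomputable def timeShift (τ : ℝ) (p : ℝ[X]) : ℝ[X] := τ⁻¹ • (X * derivative p)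

lemma eval_timeShift (τ u : ℝ) (p : ℝ[X]) :
    (timeShift τ p).eval u = u * (derivative p).eval u / τ := by
  simp only [timeShift, eval_smul, eval_mul, eval_X, smul_eq_mul]
  ring

lemma timeShift_mem_degreeLT (τ : ℝ) {n : ℕ} {p : ℝ[X]} (hp : p ∈ degreeLT ℝ n) :
    timeShift τ p ∈ degreeLT ℝ n := by
  refine Submodule.smul_mem _ _ ?_
  rw [mem_degreeLT, degree_lt_iff_coeff_zero] at hp ⊢
  rintro (_ | m) hm
  · exact coeff_X_mul_zero _
  · rw [coeff_X_mul, coeff_derivative, hp _ hm, zero_mul]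

lemma timeShift_mul (τ : ℝ) (p q : ℝ[X]) :
    timeShift τ (p * q) = timeShift τ p * q + p * timeShift τ q := by
  simp only [timeShift, derivative_mul, smul_eq_C_mul]
  ring

lemma hasDerivAt_eval_decayWeight (T τ t : ℝ) (p : ℝ[X]) :
    HasDerivAt (fun s => p.eval (decayWeight T τ s))
      ((timeShift τ p).eval (decayWeight T τ t)) t :=
  ((p.hasDerivAt _).comp t (hasDerivAt_decayWeight t)).congr_deriv (by
    rw [eval_timeShift]; ring)

lemma exists_abs_eval_decayWeight_le {T τ : ℝ} (hτ : 0 ≤ τ) (p : ℝ[X]) :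
    ∃ C, ∀ t ≤ T, |p.eval (decayWeight T τ t)| ≤ C := by
  obtain ⟨C, hC⟩ := (isCompact_Icc (a := (0 : ℝ)) (b := 1)).exists_bound_of_continuousOn
    p.continuous.continuousOn
  exact ⟨C, fun t ht => hC _ ⟨(decayWeight_pos t).le, decayWeight_le_one hτ ht⟩⟩

section Weighted

variable {T τ : ℝ} {w : ℝ → ℝ} {C : ℝ}

lemma exists_abs_eval_mul_mul_decayWeight_le (hτ : 0 ≤ τ) (p : ℝ[X])
    (hw : ∀ t ≤ T, |w t| ≤ C * (1 + (T - t))) :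
    ∃ K, ∀ t ≤ T, |p.eval (decayWeight T τ t) * w t * decayWeight T τ t|
      ≤ K * ((1 + (T - t)) * decayWeight T τ t) := by
  obtain ⟨B, hB⟩ := exists_abs_eval_decayWeight_le (T := T) hτ p
  refine ⟨B * C, fun t ht => ?_⟩
  have hB0 : 0 ≤ B := (abs_nonneg _).trans (hB t ht)
  rw [abs_mul, abs_mul, abs_of_pos (decayWeight_pos t)]
  calc |p.eval (decayWeight T τ t)| * |w t| * decayWeight T τ t
      ≤ B * (C * (1 + (T - t))) * decayWeight T τ t := by
        gcongr
        exacts [(decayWeight_pos t).le, hB t ht, hw t ht]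
    _ = B * C * ((1 + (T - t)) * decayWeight T τ t) := by ring

lemma integrableOn_eval_mul_mul_decayWeight (hτ : 0 < τ) (p : ℝ[X])
    (hwc : ContinuousOn w (Iic T)) (hw : ∀ t ≤ T, |w t| ≤ C * (1 + (T - t))) :
    IntegrableOn (fun t => p.eval (decayWeight T τ t) * w t * decayWeight T τ t) (Iic T) := by
  obtain ⟨K, hK⟩ := exists_abs_eval_mul_mul_decayWeight_le hτ.le p hw
  have hx := continuous_decayWeight (T := T) (τ := τ)
  refine Integrable.mono' ((integrableOn_one_add_sub_mul_decayWeight hτ).const_mul K)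
    ((((p.continuous.comp hx).continuousOn.mul hwc).mul hx.continuousOn).aestronglyMeasurable
      measurableSet_Iic) ?_
  filter_upwards [ae_restrict_mem measurableSet_Iic] with t ht using hK t ht

lemma tendsto_eval_mul_mul_decayWeight_atBot (hτ : 0 < τ) (p : ℝ[X])
    (hw : ∀ t ≤ T, |w t| ≤ C * (1 + (T - t))) :
    Tendsto (fun t => p.eval (decayWeight T τ t) * w t * decayWeight T τ t) atBot (𝓝 0) := by
  obtain ⟨K, hK⟩ := exists_abs_eval_mul_mul_decayWeight_le hτ.le p hw
  have hlim := (tendsto_one_add_sub_mul_decayWeight_atBot (T := T) hτ).const_mul K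
  rw [mul_zero] at hlim
  exact squeeze_zero_norm' (eventually_atBot.2 ⟨T, hK⟩) hlim

end Weighted

section Tail

variable {T M : ℝ} {v : ℝ → ℝ}

lemma abs_intervalIntegral_le_mul_sub (hvM : ∀ t ≤ T, |v t| ≤ M) {t : ℝ} (ht : t ≤ T) :
    |∫ s in t..T, v s| ≤ M * (T - t) := by
  have := intervalIntegral.norm_integral_le_of_norm_le_const (a := t) (b := T) (f := v)
    fun s hs => hvM s (by rw [uIoc_of_le ht] at hs; exact hs.2)
  rwa [abs_of_nonneg (sub_nonneg.2 ht)] at this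

lemma hasDerivAt_intervalIntegral_left_of_lt (hvc : ContinuousOn v (Iic T)) {t : ℝ}
    (ht : t < T) : HasDerivAt (fun u => ∫ s in u..T, v s) (-v t) t :=
  intervalIntegral.integral_hasDerivAt_left
    ((hvc.mono Icc_subset_Iic_self).intervalIntegrable_of_Icc ht.le)
    ((hvc.mono Iio_subset_Iic_self).stronglyMeasurableAtFilter isOpen_Iio t ht)
    (hvc.continuousAt (Iic_mem_nhds ht))

lemma continuousOn_intervalIntegral_left (hvc : ContinuousOn v (Iic T)) :
    ContinuousOn (fun u => ∫ s in u..T, v s) (Iic T) := by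
  intro t (ht : t ≤ T)
  have hle : t - 1 ≤ T := by linarith
  have hint : IntegrableOn v (uIcc (t - 1) T) := by
    rw [uIcc_of_le hle]
    exact (hvc.mono Icc_subset_Iic_self).integrableOn_compact isCompact_Icc
  have hcont := intervalIntegral.continuousOn_primitive_interval_left hint
  rw [uIcc_of_le hle] at hcont
  exact (hcont t ⟨by linarith, ht⟩).mono_of_mem_nhdsWithin <|
    mem_nhdsWithin.2 ⟨Ioi (t - 1), isOpen_Ioi, by simp, fun s hs => ⟨hs.1.out.le, hs.2⟩⟩

end Tail

theorem integral_timeShift_by_parts {T τ M : ℝ} (hτ : 0 < τ) (ψ : ℝ[X]) {v : ℝ → ℝ}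
    (hvc : ContinuousOn v (Iic T)) (hvM : ∀ t ≤ T, |v t| ≤ M) :
    (∫ t in Iic T, (timeShift τ ψ).eval (decayWeight T τ t) ^ 2 * (∫ s in t..T, v s)
        * decayWeight T τ t)
      + ∫ t in Iic T, (timeShift τ (timeShift τ ψ) + τ⁻¹ • timeShift τ ψ).eval
          (decayWeight T τ t) * (∫ s in t..T, v s) * ψ.eval (decayWeight T τ t)
          * decayWeight T τ t
    = ∫ t in Iic T, (timeShift τ ψ).eval (decayWeight T τ t) * v t
        * ψ.eval (decayWeight T τ t) * decayWeight T τ t := by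
  set x := decayWeight T τ
  set V : ℝ → ℝ := fun t => ∫ s in t..T, v s
  set δ := timeShift τ ψ
  set Q := timeShift τ δ + τ⁻¹ • δ
  have hM : 0 ≤ M := (abs_nonneg _).trans (hvM T le_rfl)
  have hVc : ContinuousOn V (Iic T) := continuousOn_intervalIntegral_left hvc
  have hV_growth : ∀ t ≤ T, |V t| ≤ M * (1 + (T - t)) := fun t ht =>
    (abs_intervalIntegral_le_mul_sub hvM ht).trans (by nlinarith)
  have hv_growth : ∀ t ≤ T, |v t| ≤ M * (1 + (T - t)) := fun t ht =>
    (hvM t ht).trans (by nlinarith)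
  have hint₁ : IntegrableOn (fun t => δ.eval (x t) ^ 2 * V t * x t) (Iic T) := by
    have := integrableOn_eval_mul_mul_decayWeight hτ (δ ^ 2) hVc hV_growth
    simp only [eval_pow] at this
    exact this
  have hint₂ : IntegrableOn (fun t => Q.eval (x t) * V t * ψ.eval (x t) * x t) (Iic T) :=
    (integrableOn_eval_mul_mul_decayWeight hτ (Q * ψ) hVc hV_growth).congr_fun
      (fun t _ => by simp only [eval_mul]; ring) measurableSet_Iic
  have hint₃ : IntegrableOn (fun t => δ.eval (x t) * v t * ψ.eval (x t) * x t) (Iic T) :=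
    (integrableOn_eval_mul_mul_decayWeight hτ (δ * ψ) hvc hv_growth).congr_fun
      (fun t _ => by simp only [eval_mul]; ring) measurableSet_Iic
  set F : ℝ → ℝ := fun t => (δ * ψ).eval (x t) * V t * x t
  have hF : ∀ t ∈ Iio T, HasDerivAt F (δ.eval (x t) ^ 2 * V t * x t
      + Q.eval (x t) * V t * ψ.eval (x t) * x t - δ.eval (x t) * v t * ψ.eval (x t) * x t) t :=
    fun t ht => (((hasDerivAt_eval_decayWeight T τ t (δ * ψ)).mul
      (hasDerivAt_intervalIntegral_left_of_lt hvc ht)).mul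
      (hasDerivAt_decayWeight t)).congr_deriv (by
        simp only [x, V, Q, δ, timeShift_mul, eval_add, eval_mul, eval_smul, smul_eq_mul,
          Pi.mul_apply]
        ring)
  have hFc : ContinuousOn F (Iic T) :=
    (((δ * ψ).continuous.comp continuous_decayWeight).continuousOn.mul hVc).mul
      continuous_decayWeight.continuousOn
  have hFT : F T = 0 := by simp [F, V]
  have hFlim : Tendsto F atBot (𝓝 0) :=
    tendsto_eval_mul_mul_decayWeight_atBot hτ (δ * ψ) hV_growth
  have h := integral_Iic_of_hasDerivAt_of_tendsto (hFc T self_mem_Iic) hF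
    ((hint₁.add hint₂).sub hint₃) hFlim
  rw [integral_sub ?_ hint₃, integral_add hint₁ hint₂, hFT, sub_zero] at h
  · exact sub_eq_zero.1 h
  · exact hint₁.add hint₂

theorem stmt_2_general (T τ : ℝ) (hτ : 0 < τ)
    (ω x : ℝ → ℝ)
    (hω : ∀ t, ω t = Real.exp ((t - T) / τ))
    (hx : ∀ t, x t = ω t)
    (I : ℝ → ℝ)
    (hIc : ContinuousOn I (Set.Iic T))
    (hInn : ∀ t ≤ T, 0 ≤ I t)
    (hIb : ∃ M, ∀ t ≤ T, I t ≤ M)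
    (V₀ : ℝ → ℝ) (hV : ∀ t, V₀ t = ∫ s in t..T, I s)
    (n : ℕ)
    (ψ : Polynomial ℝ) (hψd : ψ.degree < (n : WithBot ℕ))
    (lam : ℝ)
    (heig : ∀ φ : Polynomial ℝ, φ.degree < (n : WithBot ℕ) →
      ∫ t in Set.Iic T, φ.eval (x t) * V₀ t * ψ.eval (x t) * ω t
        = lam * ∫ t in Set.Iic T, φ.eval (x t) * (T - t) * ψ.eval (x t) * ω t)
    (δψ : ℝ → ℝ)
    (hδψ : ∀ u, δψ u = u * (Polynomial.derivative ψ).eval u / τ) :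
    (∫ t in Set.Iic T, (δψ (x t)) ^ 2 * V₀ t * ω t)
        - lam * ∫ t in Set.Iic T, (δψ (x t)) ^ 2 * (T - t) * ω t
      = (∫ t in Set.Iic T, δψ (x t) * I t * ψ.eval (x t) * ω t)
        - lam * ∫ t in Set.Iic T, δψ (x t) * ψ.eval (x t) * ω t := by
  obtain rfl : ω = decayWeight T τ := funext hω
  obtain rfl : x = decayWeight T τ := funext hx
  obtain rfl : V₀ = fun t => ∫ s in t..T, I s := funext hV
  obtain rfl : δψ = fun u => (timeShift τ ψ).eval u :=
    funext fun u => by rw [hδψ, eval_timeShift]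
  beta_reduce at heig ⊢
  obtain ⟨M, hM⟩ := hIb
  have hIM : ∀ t ≤ T, |I t| ≤ M := fun t ht =>
    abs_le.2 ⟨by linarith [hInn t ht, hM t ht], hM t ht⟩
  have hflux := integral_timeShift_by_parts hτ ψ hIc hIM
  have hlinear := integral_timeShift_by_parts (T := T) (v := fun _ => 1) (M := 1) hτ ψ
    continuousOn_const (by simp)
  simp only [intervalIntegral.integral_const, smul_eq_mul, mul_one] at hlinear
  have hδ := timeShift_mem_degreeLT τ (mem_degreeLT.2 hψd)
  have hQ := heig _ (mem_degreeLT.1 (add_mem (timeShift_mem_degreeLT τ hδ)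
    (Submodule.smul_mem _ τ⁻¹ hδ)))
  linear_combination hflux - lam * hlinear - hQ

/-- For the infinitesimal time-shift variation `δψ = D(ψ)`, the second variation of
the aggregated flow `V/t` equals the first variation of the local flow `dV/dt`. -/
theorem stmt_2 (T τ : ℝ) (hτ : 0 < τ)
    (ω x : ℝ → ℝ)
    (hω : ∀ t, ω t = Real.exp ((t - T) / τ))
    (hx : ∀ t, x t = ω t)
    (I : ℝ → ℝ)
    (hIc : ContinuousOn I (Set.Iic T))
    (hInn : ∀ t ≤ T, 0 ≤ I t)
    (hIb : ∃ M, ∀ t ≤ T, I t ≤ M)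
    (V₀ : ℝ → ℝ) (hV : ∀ t, V₀ t = ∫ s in t..T, I s)
    (n : ℕ) (hn : 1 ≤ n)
    (ψ : Polynomial ℝ) (hψ0 : ψ ≠ 0) (hψd : ψ.degree < (n : WithBot ℕ))
    (lam : ℝ)
    (heig : ∀ φ : Polynomial ℝ, φ.degree < (n : WithBot ℕ) →
      ∫ t in Set.Iic T, φ.eval (x t) * V₀ t * ψ.eval (x t) * ω t
        = lam * ∫ t in Set.Iic T, φ.eval (x t) * (T - t) * ψ.eval (x t) * ω t)
    (δψ : ℝ → ℝ)
    (hδψ : ∀ u, δψ u = u * (Polynomial.derivative ψ).eval u / τ) :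
    (∫ t in Set.Iic T, (δψ (x t)) ^ 2 * V₀ t * ω t)
        - lam * ∫ t in Set.Iic T, (δψ (x t)) ^ 2 * (T - t) * ω t
      = (∫ t in Set.Iic T, δψ (x t) * I t * ψ.eval (x t) * ω t)
        - lam * ∫ t in Set.Iic T, δψ (x t) * ψ.eval (x t) * ω t :=
  stmt_2_general T τ hτ ω x hω hx I hIc hInn hIb V₀ hV n ψ hψd lam heig δψ hδψ
end

section
/- Let μ be a measure on ℝ with all moments ∫ x^m dμ finite, and fix n ≥ 1 such that the monomials 1, x, …, x^{n−1} are linearly independent in L²(μ) (equivalently, the n×n Hankel moment matrix of μ is positive definite). Then for every real polynomial P of degree at most 2n−2 there exist real numbers λ₀,…,λ_{n−1} and real polynomials ψ₀,…,ψ_{n−1}, each of degree at most n−1 and orthonormal with respect to μ (∫ ψ_i ψ_j dμ = δ_{ij}), such that P(x) = Σ_{i=0}^{n−1} λ_i ψ_i(x)² for all x ∈ ℝ. Consequently, ∫ P dμ splits as the sum of a nonnegative part Σ_{λ_i>0} λ_i ∫ ψ_i² dμ and a nonpositive part Σ_{λ_i<0} λ_i ∫ ψ_i² dμ. -/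
/-!
Write `P(x) = v(x)ᵀ B v(x)` with `v(x) = (1, x, …, x^(n-1))` and `B` symmetric (possible since
`deg P ≤ 2n - 2`). The theorem is then the simultaneous diagonalization of the positive definite
Hankel moment matrix `H` and of `B`: with `S = √H`, diagonalize `S B S = U Λ Uᵀ` orthogonally; the
rows of `D = Uᵀ S⁻¹` are the coefficient vectors of the `ψ_i`, and `D H Dᵀ = 1` is their
orthonormality while `Dᵀ Λ D = B` is `P = ∑ λ_i ψ_i²`.
-/

open Matrix Polynomial MeasureTheory

open scoped MatrixOrder ComplexOrder in
theorem Matrix.PosDef.exists_simultaneous_diagonalization {ι 𝕜 : Type*} [Fintype ι]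
    [DecidableEq ι] [RCLike 𝕜] {H B : Matrix ι ι 𝕜} (hH : H.PosDef) (hB : B.IsHermitian) :
    ∃ (D : Matrix ι ι 𝕜) (lam : ι → ℝ),
      D * H * Dᴴ = 1 ∧ Dᴴ * diagonal (RCLike.ofReal ∘ lam) * D = B := by
  set S := CFC.sqrt H
  have hSS : S * S = H := CFC.sqrt_mul_sqrt_self H hH.posSemidef.nonneg
  have hSh : Sᴴ = S := (CFC.sqrt_nonneg H).posSemidef.isHermitian
  have hSdet : IsUnit S.det :=
    (isUnit_iff_isUnit_det S).mp (CFC.isUnit_sqrt_iff_isStrictlyPositive.mpr hH.isStrictlyPositive)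
  have hSinv_mul : S⁻¹ * S = 1 := nonsing_inv_mul S hSdet
  have hmul_Sinv : S * S⁻¹ = 1 := mul_nonsing_inv S hSdet
  have hSinv_conjTranspose : (S⁻¹)ᴴ = S⁻¹ := by rw [conjTranspose_nonsing_inv, hSh]
  have hM : (S * B * S).IsHermitian := by
    simp only [IsHermitian, conjTranspose_mul, hSh, hB.eq, Matrix.mul_assoc]
  set U : Matrix ι ι 𝕜 := (hM.eigenvectorUnitary : Matrix ι ι 𝕜)
  have hstarU_mul : star U * U = 1 := Unitary.coe_star_mul_self _
  have hmul_starU : U * star U = 1 := Unitary.coe_mul_star_self _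
  have hdiag : star U * (S * B * S) * U = diagonal (RCLike.ofReal ∘ hM.eigenvalues) := by
    simpa using hM.conjStarAlgAut_star_eigenvectorUnitary
  refine ⟨star U * S⁻¹, hM.eigenvalues, ?_, ?_⟩
  · rw [conjTranspose_mul, hSinv_conjTranspose, star_eq_conjTranspose,
      conjTranspose_conjTranspose, ← hSS]
    calc star U * S⁻¹ * (S * S) * (S⁻¹ * U) = star U * (S⁻¹ * S) * (S * S⁻¹) * U := by
          simp only [Matrix.mul_assoc]
      _ = 1 := by rw [hSinv_mul, hmul_Sinv, Matrix.mul_one, Matrix.mul_one, hstarU_mul]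
  · rw [← hdiag, conjTranspose_mul, hSinv_conjTranspose, star_eq_conjTranspose,
      conjTranspose_conjTranspose, ← star_eq_conjTranspose]
    calc S⁻¹ * U * (star U * (S * B * S) * U) * (star U * S⁻¹)
        = S⁻¹ * (U * star U) * (S * B * S) * (U * star U) * S⁻¹ := by
          simp only [Matrix.mul_assoc]
      _ = (S⁻¹ * S) * B * (S * S⁻¹) := by
          rw [hmul_starU, Matrix.mul_one, Matrix.mul_one]; simp only [Matrix.mul_assoc]
      _ = B := by rw [hSinv_mul, hmul_Sinv, Matrix.mul_one, Matrix.one_mul]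

namespace Polynomial

section hankelForm

variable {R : Type*} [CommSemiring R]

noncomputable def hankelForm (n : ℕ) : Matrix (Fin n) (Fin n) R →ₗ[R] R[X] where
  toFun A := ∑ a, ∑ b, C (A a b) * X ^ ((a : ℕ) + b)
  map_add' A B := by simp only [Matrix.add_apply, C_add, add_mul, Finset.sum_add_distrib]
  map_smul' c A := by simp only [Matrix.smul_apply, smul_eq_mul, C_mul, mul_assoc, Finset.mul_sum,
    RingHom.id_apply, smul_eq_C_mul]

variable {n : ℕ}

theorem hankelForm_apply (A : Matrix (Fin n) (Fin n) R) :
    hankelForm n A = ∑ a, ∑ b, C (A a b) * X ^ ((a : ℕ) + b) := rfl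

theorem hankelForm_transpose (A : Matrix (Fin n) (Fin n) R) :
    hankelForm n Aᵀ = hankelForm n A := by
  rw [hankelForm_apply, hankelForm_apply, Finset.sum_comm]
  simp only [transpose_apply, add_comm]

theorem hankelForm_single (a b : Fin n) :
    hankelForm n (Matrix.single a b (1 : R)) = X ^ ((a : ℕ) + b) := by
  simp only [hankelForm_apply, single_apply, ite_and, apply_ite C, C_1, C_0, ite_mul, one_mul,
    zero_mul, Finset.sum_ite_irrel, Finset.sum_const_zero, Fintype.sum_ite_eq]

theorem X_pow_mem_range_hankelForm {k : ℕ} (hn : 1 ≤ n) (hk : k ≤ 2 * n - 2) :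
    X ^ k ∈ LinearMap.range (hankelForm (R := R) n) := by
  refine ⟨Matrix.single ⟨min k (n - 1), by omega⟩ ⟨k - min k (n - 1), by omega⟩ 1, ?_⟩
  rw [hankelForm_single]
  congr 1
  simp only
  omega

theorem mem_range_hankelForm {P : R[X]} (hn : 1 ≤ n) (hP : P.natDegree ≤ 2 * n - 2) :
    P ∈ LinearMap.range (hankelForm n) := by
  rw [as_sum_range' P (2 * n - 1) (by omega)]
  refine Submodule.sum_mem _ fun k hk => ?_
  have hk' : k ≤ 2 * n - 2 := by have := Finset.mem_range.mp hk; omega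
  rw [← smul_X_eq_monomial]
  exact Submodule.smul_mem _ _ (X_pow_mem_range_hankelForm hn hk')

theorem ofFn_mul_ofFn [DecidableEq R] (c d : Fin n → R) :
    ofFn n c * ofFn n d = hankelForm n (vecMulVec c d) := by
  simp only [ofFn_eq_sum_monomial, hankelForm_apply, Finset.sum_mul_sum, vecMulVec_apply,
    monomial_mul_monomial, C_mul_X_pow_eq_monomial]

theorem sum_C_mul_ofFn_sq [DecidableEq R] (D : Matrix (Fin n) (Fin n) R) (lam : Fin n → R) :
    ∑ i, C (lam i) * ofFn n (D i) ^ 2 = hankelForm n (Dᵀ * diagonal lam * D) := by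
  have h : Dᵀ * diagonal lam * D = ∑ i, lam i • vecMulVec (D i) (D i) := by
    ext a b
    rw [mul_apply]
    simp only [mul_diagonal, transpose_apply, Matrix.sum_apply, Matrix.smul_apply, vecMulVec_apply,
      smul_eq_mul]
    exact Finset.sum_congr rfl fun i _ => by ring
  simp only [h, map_sum, map_smul, ← ofFn_mul_ofFn, sq, smul_eq_C_mul]

end hankelForm

theorem exists_isSymm_hankelForm_eq {K : Type*} [Field K] [NeZero (2 : K)] {n : ℕ} {P : K[X]}
    (hn : 1 ≤ n) (hP : P.natDegree ≤ 2 * n - 2) :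
    ∃ B : Matrix (Fin n) (Fin n) K, B.IsSymm ∧ hankelForm n B = P := by
  obtain ⟨A, rfl⟩ := mem_range_hankelForm hn hP
  refine ⟨(2 : K)⁻¹ • (A + Aᵀ), ?_, ?_⟩
  · simp [IsSymm, transpose_add, add_comm]
  · rw [map_smul, map_add, hankelForm_transpose, ← two_smul K, smul_smul,
      inv_mul_cancel₀ two_ne_zero, one_smul]

variable {μ : Measure ℝ}

theorem integrable_eval (hmom : ∀ m : ℕ, Integrable (fun x : ℝ => x ^ m) μ) (p : ℝ[X]) :
    Integrable (fun x => p.eval x) μ := by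
  induction p using Polynomial.induction_on' with
  | add p q hp hq => simp only [eval_add]; exact hp.add hq
  | monomial k a => simpa only [eval_monomial] using (hmom k).const_mul a

theorem integral_eval_hankelForm (hmom : ∀ m : ℕ, Integrable (fun x : ℝ => x ^ m) μ) {n : ℕ}
    (A : Matrix (Fin n) (Fin n) ℝ) :
    ∫ x, (hankelForm n A).eval x ∂μ = ∑ a, ∑ b, A a b * ∫ x, x ^ ((a : ℕ) + b) ∂μ := by
  simp only [hankelForm_apply, eval_finsetSum, eval_mul, eval_C, eval_pow, eval_X]
  refine (integral_finsetSum _ fun a _ => integrable_finsetSum _ fun b _ =>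
    (hmom _).const_mul _).trans (Finset.sum_congr rfl fun a _ => ?_)
  refine (integral_finsetSum _ fun b _ => (hmom _).const_mul _).trans
    (Finset.sum_congr rfl fun b _ => ?_)
  exact integral_const_mul _ _

theorem integral_eval_ofFn_mul_eval_ofFn (hmom : ∀ m : ℕ, Integrable (fun x : ℝ => x ^ m) μ)
    {n : ℕ} (D : Matrix (Fin n) (Fin n) ℝ) (i j : Fin n) :
    ∫ x, (ofFn n (D i)).eval x * (ofFn n (D j)).eval x ∂μ
      = (D * Matrix.of (fun a b : Fin n => ∫ x, x ^ ((a : ℕ) + b) ∂μ) * Dᵀ) i j := by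
  simp only [← eval_mul, ofFn_mul_ofFn, integral_eval_hankelForm hmom, vecMulVec_apply,
    mul_apply, of_apply, transpose_apply, Finset.sum_mul]
  rw [Finset.sum_comm]
  exact Finset.sum_congr rfl fun b _ => Finset.sum_congr rfl fun a _ => by ring

theorem integral_eval_sum_C_mul (hmom : ∀ m : ℕ, Integrable (fun x : ℝ => x ^ m) μ) {ι : Type*}
    (s : Finset ι) (c : ι → ℝ) (p : ι → ℝ[X]) :
    ∫ x, (∑ i ∈ s, C (c i) * p i).eval x ∂μ = ∑ i ∈ s, c i * ∫ x, (p i).eval x ∂μ := by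
  simp only [eval_finsetSum, eval_mul, eval_C]
  refine (integral_finsetSum _ fun i _ => (integrable_eval hmom _).const_mul _).trans
    (Finset.sum_congr rfl fun i _ => ?_)
  exact integral_const_mul _ _

end Polynomial

theorem Finset.sum_mul_eq_sum_filter_pos_add_sum_filter_neg {ι α : Type*}
    [NonUnitalNonAssocSemiring α] [LinearOrder α] (s : Finset ι) (lam f : ι → α) :
    ∑ i ∈ s, lam i * f i
      = ∑ i ∈ s with 0 < lam i, lam i * f i + ∑ i ∈ s with lam i < 0, lam i * f i := by
  rw [Finset.sum_filter, Finset.sum_filter, ← Finset.sum_add_distrib]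
  refine Finset.sum_congr rfl fun i _ => ?_
  rcases lt_trichotomy (lam i) 0 with h | h | h
  · simp [h, h.not_gt]
  · simp [h]
  · simp [h, h.not_gt]

/-- Every real polynomial `P` of degree at most `2n−2` can be written as
`P(x) = Σ_i λ_i ψ_i(x)²` with `ψ_i` polynomials of degree at most `n−1` that are
orthonormal with respect to `μ`; consequently `∫ P dμ` splits as the sum of a
nonnegative part (over `λ_i > 0`) and a nonpositive part (over `λ_i < 0`). -/
theorem stmt_17 (μ : Measure ℝ)
    (hmom : ∀ m : ℕ, Integrable (fun x : ℝ => x ^ m) μ)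
    (n : ℕ) (hn : 1 ≤ n)
    (hH : (Matrix.of fun i j : Fin n => ∫ x : ℝ, x ^ ((i : ℕ) + (j : ℕ)) ∂μ).PosDef) :
    ∀ P : Polynomial ℝ, P.natDegree ≤ 2 * n - 2 →
      ∃ lam : Fin n → ℝ, ∃ ψ : Fin n → Polynomial ℝ,
        (∀ i, (ψ i).natDegree ≤ n - 1) ∧
        (∀ i j, (∫ x, (ψ i).eval x * (ψ j).eval x ∂μ) = if i = j then 1 else 0) ∧
        (∀ x : ℝ, P.eval x = ∑ i, lam i * ((ψ i).eval x) ^ 2) ∧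
        ((∫ x, P.eval x ∂μ)
            = (∑ i ∈ Finset.univ.filter fun i => 0 < lam i,
                lam i * ∫ x, ((ψ i).eval x) ^ 2 ∂μ)
              + (∑ i ∈ Finset.univ.filter fun i => lam i < 0,
                lam i * ∫ x, ((ψ i).eval x) ^ 2 ∂μ)) ∧
        (0 ≤ ∑ i ∈ Finset.univ.filter fun i => 0 < lam i,
              lam i * ∫ x, ((ψ i).eval x) ^ 2 ∂μ) ∧
        ((∑ i ∈ Finset.univ.filter fun i => lam i < 0,
              lam i * ∫ x, ((ψ i).eval x) ^ 2 ∂μ) ≤ 0) := by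
  intro P hP
  obtain ⟨B, hB, rfl⟩ := exists_isSymm_hankelForm_eq hn hP
  obtain ⟨D, lam, hDH, hDB⟩ :=
    hH.exists_simultaneous_diagonalization (isHermitian_iff_isSymm.mpr hB)
  simp only [conjTranspose_eq_transpose_of_trivial, RCLike.ofReal_real_eq_id, Function.id_comp]
    at hDH hDB
  set ψ : Fin n → ℝ[X] := fun i => ofFn n (D i)
  have horth : ∀ i j, ∫ x, (ψ i).eval x * (ψ j).eval x ∂μ = if i = j then 1 else 0 := by
    intro i j
    rw [integral_eval_ofFn_mul_eval_ofFn hmom, hDH, Matrix.one_apply]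
  have hrep : hankelForm n B = ∑ i, C (lam i) * ψ i ^ 2 := by
    rw [sum_C_mul_ofFn_sq, hDB]
  have hsq_nonneg : ∀ i, 0 ≤ ∫ x, (ψ i).eval x ^ 2 ∂μ := fun i =>
    integral_nonneg fun x => sq_nonneg _
  refine ⟨lam, ψ, fun i => Nat.le_pred_of_lt (ofFn_natDegree_lt hn _), horth,
    fun x => by simp [hrep, eval_finsetSum], ?_, ?_, ?_⟩
  · rw [hrep, integral_eval_sum_C_mul hmom,
      ← Finset.sum_mul_eq_sum_filter_pos_add_sum_filter_neg]
    simp only [eval_pow]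
  · exact Finset.sum_nonneg fun i hi =>
      mul_nonneg (Finset.mem_filter.mp hi).2.le (hsq_nonneg i)
  · exact Finset.sum_nonpos fun i hi =>
      mul_nonpos_of_nonpos_of_nonneg (Finset.mem_filter.mp hi).2.le (hsq_nonneg i)
end
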